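/- arXiv:1801.08691 — 4 statements merged into one kernel-verified Lean document; each statement's English description precedes it below -/
import Mathlib

section
/- Let f : ℝ^N → ℝ be differentiable, μ-strongly convex with gradient L-Lipschitz continuous (0 < μ ≤ L), let γ > 0, let x, x' ∈ ℝ^N with x ≠ x', set s = x − x', y = ∇f(x) − ∇f(x'), ρ = 1/⟨s, y⟩, τ = ⟨s, y⟩/‖y‖², u_γ = s − (γτ/(1+γ)) y, and H = γτ·Id + ρ(1+γ) u_γ u_γ^T − ρ γ²τ²/(1+γ) · y y^T (the zero-memory BFGS inverse-Hessian approximation). Then a·Id ⪯ H ⪯ b·Id in the Loewner partial order, where a = (γ/(1+γ)) L^{-1} > 0 and b = (1 + 2γ) μ^{-1} − ((2+γ)γ/(1+γ)) L^{-1}. -/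
open Matrix

noncomputable section

/-- Euclidean norm `‖x‖ = √⟨x,x⟩` on `ℝ^N` (inner product `⟨x,y⟩ = ∑ i, x i * y i`). -/
def euNorm {N : ℕ} (x : Fin N → ℝ) : ℝ := Real.sqrt (x ⬝ᵥ x)

/-- The continuous linear functional `v ↦ ⟨w, v⟩`; `HasFDerivAt f (dotCLM (f' x)) x`
expresses that `f` is differentiable at `x` with gradient `f' x`. -/
def dotCLM {N : ℕ} (w : Fin N → ℝ) : (Fin N → ℝ) →L[ℝ] ℝ :=
  LinearMap.toContinuousLinearMap
    { toFun := fun v => w ⬝ᵥ v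
      map_add' := fun a b => by simp [dotProduct_add]
      map_smul' := fun c a => by simp [dotProduct_smul] }

/-!
Strong convexity and cocoercivity of the gradient give the secant bounds `μ‖s‖² ≤ ⟪s, y⟫` and
`‖y‖² ≤ L ⟪s, y⟫`, i.e. `1/L ≤ τ` and `‖s‖² / ⟪s, y⟫ ≤ 1/μ`.

The quadratic form of `H` equals `γτ ‖v - ρ⟪s, v⟫ y‖² + ρ ⟪s, v⟫²`, that of the BFGS update of
`γτ • Id`. Young's inequality `‖v‖² ≤ (1 + γ) ‖w‖² + (1 + 1/γ) ‖v - w‖²` with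
`w = v - ρ⟪s, v⟫ y` bounds it below by `γτ/(1+γ) ‖v‖² ≥ a ‖v‖²`.

For the upper bound, drop the negative `y yᵀ` term and apply Cauchy–Schwarz to `u_γ u_γᵀ`: the form
is at most `(γτ + ρ(1+γ)‖u_γ‖²) ‖v‖² = ((1+γ) ‖s‖² / ⟪s, y⟫ - γτ/(1+γ)) ‖v‖²`, and
`b - ((1+γ)/μ - γ/((1+γ)L)) = γ (1/μ - 1/L) ≥ 0`.
-/

open scoped RealInnerProductSpace

section ConvexGradient

variable {E : Type*} [NormedAddCommGroup E] [InnerProductSpace ℝ E] {f : E → ℝ} {f' : E → E}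
  {L : ℝ}

theorem hasDerivAt_comp_add_smul (hf : ∀ z, HasFDerivAt f (innerSL ℝ (f' z)) z) (p d : E)
    (t : ℝ) : HasDerivAt (fun t : ℝ => f (p + t • d)) ⟪f' (p + t • d), d⟫ t := by
  have hline : HasDerivAt (fun t : ℝ => p + t • d) d t := by
    simpa using ((hasDerivAt_id t).smul_const d).const_add p
  exact (hf (p + t • d)).comp_hasDerivAt t hline

theorem ConvexOn.add_inner_sub_le (hconv : ConvexOn ℝ Set.univ f)
    (hf : ∀ z, HasFDerivAt f (innerSL ℝ (f' z)) z) (p w : E) :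
    f p + ⟪f' p, w - p⟫ ≤ f w := by
  have hline : ConvexOn ℝ Set.univ fun t : ℝ => f (p + t • (w - p)) := by
    simpa [Function.comp_def, AffineMap.lineMap_apply_module', add_comm]
      using hconv.comp_affineMap (AffineMap.lineMap p w)
  have hslope := hline.le_slope_of_hasDerivAt (Set.mem_univ 0) (Set.mem_univ 1) one_pos
    (by simpa using hasDerivAt_comp_add_smul hf p (w - p) 0)
  simp only [slope_def_field, one_smul, add_sub_cancel, zero_smul, add_zero, sub_zero,
    div_one] at hslope
  linarith

theorem ConvexOn.inner_sub_gradient_nonneg (hconv : ConvexOn ℝ Set.univ f)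
    (hf : ∀ z, HasFDerivAt f (innerSL ℝ (f' z)) z) (p w : E) :
    0 ≤ ⟪f' w - f' p, w - p⟫ := by
  have h₁ := hconv.add_inner_sub_le hf p w
  have h₂ := hconv.add_inner_sub_le hf w p
  rw [← neg_sub w p, inner_neg_right] at h₂
  rw [inner_sub_left]
  linarith

theorem le_add_inner_add_half_mul_norm_sq (hf : ∀ z, HasFDerivAt f (innerSL ℝ (f' z)) z)
    (hlip : ∀ z w, ‖f' z - f' w‖ ≤ L * ‖z - w‖) (z d : E) :
    f (z + d) ≤ f z + ⟪f' z, d⟫ + L / 2 * ‖d‖ ^ 2 := by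
  -- `f` along the ray minus its quadratic model; the Lipschitz bound makes it antitone on `t ≥ 0`
  set k : ℝ → ℝ := fun t => f (z + t • d) - t * ⟪f' z, d⟫ - L / 2 * t ^ 2 * ‖d‖ ^ 2
  have hk : ∀ t, HasDerivAt k (⟪f' (z + t • d) - f' z, d⟫ - L * t * ‖d‖ ^ 2) t := by
    intro t
    refine (((hasDerivAt_comp_add_smul hf z d t).sub (hasDerivAt_mul_const ⟪f' z, d⟫)).sub
      (((hasDerivAt_pow 2 t).const_mul (L / 2)).mul_const (‖d‖ ^ 2))).congr_deriv ?_
    rw [inner_sub_left]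
    ring
  have hk' : ∀ t ∈ interior (Set.Ici (0 : ℝ)), deriv k t ≤ 0 := by
    intro t ht
    rw [interior_Ici, Set.mem_Ioi] at ht
    have hgrad : ‖f' (z + t • d) - f' z‖ ≤ L * (t * ‖d‖) := by
      simpa [norm_smul, abs_of_pos ht] using hlip (z + t • d) z
    have := real_inner_le_norm (f' (z + t • d) - f' z) d
    rw [(hk t).deriv]
    nlinarith [norm_nonneg d]
  have hdiff : Differentiable ℝ k := fun t => (hk t).differentiableAt
  have hk₁ := (convex_Ici 0).image_sub_le_mul_sub_of_deriv_le hdiff.continuous.continuousOn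
    (hdiff.differentiableOn.mono interior_subset) hk' 0 Set.self_mem_Ici 1
    (Set.mem_Ici.2 zero_le_one) zero_le_one
  have hk0 : k 0 = f z := by simp [k]
  have hk1 : k 1 = f (z + d) - ⟪f' z, d⟫ - L / 2 * ‖d‖ ^ 2 := by simp [k]
  linarith

theorem ConvexOn.le_sub_norm_sq_div_of_gradient_eq_zero (hL : 0 < L)
    (hconv : ConvexOn ℝ Set.univ f) (hf : ∀ z, HasFDerivAt f (innerSL ℝ (f' z)) z)
    (hlip : ∀ z w, ‖f' z - f' w‖ ≤ L * ‖z - w‖) {w : E} (hw : f' w = 0) (p : E) :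
    f w ≤ f p - ‖f' p‖ ^ 2 / (2 * L) := by
  have hmin := hconv.add_inner_sub_le hf w (p + (-L⁻¹) • f' p)
  have hdesc := le_add_inner_add_half_mul_norm_sq hf hlip p ((-L⁻¹) • f' p)
  rw [hw, inner_zero_left, add_zero] at hmin
  rw [inner_smul_right, real_inner_self_eq_norm_sq, norm_smul, mul_pow, Real.norm_eq_abs,
    sq_abs] at hdesc
  have : -L⁻¹ * ‖f' p‖ ^ 2 + L / 2 * ((-L⁻¹) ^ 2 * ‖f' p‖ ^ 2) = -(‖f' p‖ ^ 2 / (2 * L)) := by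
    field_simp
    ring
  linarith

/-- Tilting `f` by the linear functional `⟪f' w, ·⟫` makes `w` a critical point. -/
theorem ConvexOn.add_inner_sub_add_norm_sq_div_le (hL : 0 < L)
    (hconv : ConvexOn ℝ Set.univ f) (hf : ∀ z, HasFDerivAt f (innerSL ℝ (f' z)) z)
    (hlip : ∀ z w, ‖f' z - f' w‖ ≤ L * ‖z - w‖) (p w : E) :
    f w + ⟪f' w, p - w⟫ + ‖f' p - f' w‖ ^ 2 / (2 * L) ≤ f p := by
  have htilt := ConvexOn.le_sub_norm_sq_div_of_gradient_eq_zero hL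
    (f := fun z => f z - ⟪f' w, z⟫) (f' := fun z => f' z - f' w)
    (hconv.sub ((innerSL ℝ (f' w)).toLinearMap.concaveOn convex_univ))
    (fun z => ((hf z).sub (innerSL ℝ (f' w)).hasFDerivAt).congr_fderiv (map_sub _ _ _).symm)
    (fun z v => by simpa only [sub_sub_sub_cancel_right] using hlip z v) (sub_self (f' w)) p
  simp only [inner_sub_right] at htilt ⊢
  linarith

theorem ConvexOn.norm_sub_sq_le_mul_inner (hL : 0 < L)
    (hconv : ConvexOn ℝ Set.univ f) (hf : ∀ z, HasFDerivAt f (innerSL ℝ (f' z)) z)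
    (hlip : ∀ z w, ‖f' z - f' w‖ ≤ L * ‖z - w‖) (p w : E) :
    ‖f' p - f' w‖ ^ 2 ≤ L * ⟪f' p - f' w, p - w⟫ := by
  have h₁ := hconv.add_inner_sub_add_norm_sq_div_le hL hf hlip p w
  have h₂ := hconv.add_inner_sub_add_norm_sq_div_le hL hf hlip w p
  rw [norm_sub_rev] at h₂
  have hsum : ‖f' p - f' w‖ ^ 2 / L ≤ ⟪f' p - f' w, p - w⟫ := by
    rw [← neg_sub p w, inner_neg_right] at h₂
    rw [inner_sub_left]
    have : ‖f' p - f' w‖ ^ 2 / L = 2 * (‖f' p - f' w‖ ^ 2 / (2 * L)) := by field_simp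
    linarith
  rwa [div_le_iff₀ hL, mul_comm] at hsum

theorem StrongConvexOn.mul_norm_sub_sq_le_inner {μ : ℝ} (hsc : StrongConvexOn Set.univ μ f)
    (hf : ∀ z, HasFDerivAt f (innerSL ℝ (f' z)) z) (p w : E) :
    μ * ‖w - p‖ ^ 2 ≤ ⟪f' w - f' p, w - p⟫ := by
  have hgrad : ∀ z, HasFDerivAt (fun z => f z - μ / 2 * ‖z‖ ^ 2) (innerSL ℝ (f' z - μ • z)) z := by
    intro z
    refine ((hf z).sub
      ((hasStrictFDerivAt_norm_sq z).hasFDerivAt.const_mul (μ / 2))).congr_fderiv ?_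
    ext v
    simp only [_root_.sub_apply, coe_innerSL_apply, _root_.smul_apply, nsmul_eq_mul,
      Nat.cast_ofNat, smul_eq_mul, map_sub, map_smul]
    ring
  have hmono := (strongConvexOn_iff_convex.1 hsc).inner_sub_gradient_nonneg hgrad p w
  rw [sub_sub_sub_comm, ← smul_sub, inner_sub_left, real_inner_smul_left,
    real_inner_self_eq_norm_sq] at hmono
  linarith

end ConvexGradient

section ZeroMemoryBFGS

variable {E : Type*} [NormedAddCommGroup E] [InnerProductSpace ℝ E]
  {γ ρ τ L : ℝ} {s y u : E}

theorem norm_add_sq_le_one_add_mul (hγ : 0 < γ) (a b : E) :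
    ‖a + b‖ ^ 2 ≤ (1 + γ) * ‖a‖ ^ 2 + (1 + γ⁻¹) * ‖b‖ ^ 2 := by
  have hcs := real_inner_le_norm a b
  have hamgm : 2 * (‖a‖ * ‖b‖) ≤ γ * ‖a‖ ^ 2 + γ⁻¹ * ‖b‖ ^ 2 := by
    have h := mul_nonneg (inv_nonneg.2 hγ.le) (sq_nonneg (γ * ‖a‖ - ‖b‖))
    have : γ⁻¹ * (γ * ‖a‖ - ‖b‖) ^ 2 = γ * ‖a‖ ^ 2 - 2 * (‖a‖ * ‖b‖) + γ⁻¹ * ‖b‖ ^ 2 := by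
      field_simp
      ring
    linarith
  rw [norm_add_sq_real]
  linarith

theorem zeroMemoryBFGS_quadratic_eq (hsy : ⟪s, y⟫ ≠ 0) (hy : y ≠ 0) (hγ : 1 + γ ≠ 0)
    (hρ : ρ = ⟪s, y⟫⁻¹) (hτ : τ = ⟪s, y⟫ / ‖y‖ ^ 2) (hu : u = s - (γ * τ / (1 + γ)) • y)
    (v : E) :
    γ * τ * ‖v‖ ^ 2 + ρ * (1 + γ) * ⟪u, v⟫ ^ 2 - ρ * γ ^ 2 * τ ^ 2 / (1 + γ) * ⟪y, v⟫ ^ 2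
      = γ * τ * ‖v - (ρ * ⟪s, v⟫) • y‖ ^ 2 + ρ * ⟪s, v⟫ ^ 2 := by
  have hy' : ‖y‖ ≠ 0 := norm_ne_zero_iff.2 hy
  subst hρ hτ hu
  rw [inner_sub_left, real_inner_smul_left, norm_sub_sq_real, norm_smul, real_inner_smul_right,
    mul_pow, Real.norm_eq_abs, sq_abs, real_inner_comm v y]
  field_simp
  ring

theorem inv_le_inner_div_norm_sq (hsy : 0 < ⟪s, y⟫) (hyL : ‖y‖ ^ 2 ≤ L * ⟪s, y⟫) :
    L⁻¹ ≤ ⟪s, y⟫ / ‖y‖ ^ 2 := by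
  have hy : y ≠ 0 := fun h => hsy.ne' (by rw [h, inner_zero_right])
  have hy2 : 0 < ‖y‖ ^ 2 := by positivity
  have hL : 0 < L := pos_of_mul_pos_left (hy2.trans_le hyL) hsy.le
  rw [inv_le_iff_one_le_mul₀ hL, div_mul_eq_mul_div, one_le_div hy2, mul_comm]
  exact hyL

theorem le_zeroMemoryBFGS_quadratic (hγ : 0 < γ) (hsy : 0 < ⟪s, y⟫)
    (hyL : ‖y‖ ^ 2 ≤ L * ⟪s, y⟫)
    (hρ : ρ = ⟪s, y⟫⁻¹) (hτ : τ = ⟪s, y⟫ / ‖y‖ ^ 2) (hu : u = s - (γ * τ / (1 + γ)) • y)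
    (v : E) :
    γ / (1 + γ) / L * ‖v‖ ^ 2 ≤
      γ * τ * ‖v‖ ^ 2 + ρ * (1 + γ) * ⟪u, v⟫ ^ 2 - ρ * γ ^ 2 * τ ^ 2 / (1 + γ) * ⟪y, v⟫ ^ 2 := by
  have hy : y ≠ 0 := fun h => hsy.ne' (by rw [h, inner_zero_right])
  rw [zeroMemoryBFGS_quadratic_eq hsy.ne' hy (by positivity) hρ hτ hu]
  set w := v - (ρ * ⟪s, v⟫) • y
  have hyoung := norm_add_sq_le_one_add_mul hγ w ((ρ * ⟪s, v⟫) • y)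
  rw [sub_add_cancel, norm_smul, mul_pow, Real.norm_eq_abs, sq_abs] at hyoung
  -- `τ ρ ‖y‖² = 1` makes the Young remainder exactly `ρ ⟪s, v⟫²`
  have hrem : γ / (1 + γ) * τ * ((1 + γ⁻¹) * ((ρ * ⟪s, v⟫) ^ 2 * ‖y‖ ^ 2)) = ρ * ⟪s, v⟫ ^ 2 := by
    have : ‖y‖ ≠ 0 := norm_ne_zero_iff.2 hy
    subst hρ hτ
    field_simp
    ring
  calc γ / (1 + γ) / L * ‖v‖ ^ 2 = γ / (1 + γ) * L⁻¹ * ‖v‖ ^ 2 := by ring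
    _ ≤ γ / (1 + γ) * τ * ‖v‖ ^ 2 := by
        gcongr
        exact hτ ▸ inv_le_inner_div_norm_sq hsy hyL
    _ ≤ γ / (1 + γ) * τ * ((1 + γ) * ‖w‖ ^ 2 + (1 + γ⁻¹) * ((ρ * ⟪s, v⟫) ^ 2 * ‖y‖ ^ 2)) := by
        have : 0 ≤ τ := hτ ▸ div_nonneg hsy.le (sq_nonneg _)
        gcongr
    _ = γ * τ * ‖w‖ ^ 2 + ρ * ⟪s, v⟫ ^ 2 := by
        rw [mul_add, hrem]
        field_simp

theorem zeroMemoryBFGS_quadratic_le {μ : ℝ} (hμ : 0 < μ) (hμL : μ ≤ L) (hγ : 0 < γ)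
    (hsy : 0 < ⟪s, y⟫) (hμs : μ * ‖s‖ ^ 2 ≤ ⟪s, y⟫) (hyL : ‖y‖ ^ 2 ≤ L * ⟪s, y⟫)
    (hρ : ρ = ⟪s, y⟫⁻¹) (hτ : τ = ⟪s, y⟫ / ‖y‖ ^ 2) (hu : u = s - (γ * τ / (1 + γ)) • y)
    (v : E) :
    γ * τ * ‖v‖ ^ 2 + ρ * (1 + γ) * ⟪u, v⟫ ^ 2 - ρ * γ ^ 2 * τ ^ 2 / (1 + γ) * ⟪y, v⟫ ^ 2 ≤
      ((1 + 2 * γ) / μ - (2 + γ) * γ / (1 + γ) / L) * ‖v‖ ^ 2 := by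
  have hy : y ≠ 0 := fun h => hsy.ne' (by rw [h, inner_zero_right])
  have hρ_pos : 0 < ρ := hρ ▸ inv_pos.2 hsy
  have hτL : L⁻¹ ≤ τ := hτ ▸ inv_le_inner_div_norm_sq hsy hyL
  have hsμ : ‖s‖ ^ 2 / ⟪s, y⟫ ≤ μ⁻¹ := by
    rw [div_le_iff₀ hsy, inv_mul_eq_div, le_div_iff₀ hμ, mul_comm]
    exact hμs
  have hu2 : γ * τ + ρ * (1 + γ) * ‖u‖ ^ 2 = (1 + γ) * (‖s‖ ^ 2 / ⟪s, y⟫) - γ / (1 + γ) * τ := by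
    have : ‖y‖ ≠ 0 := norm_ne_zero_iff.2 hy
    subst hρ hτ hu
    rw [norm_sub_sq_real, norm_smul, real_inner_smul_right, mul_pow, Real.norm_eq_abs, sq_abs]
    field_simp
    ring
  have hcoef : γ * τ + ρ * (1 + γ) * ‖u‖ ^ 2 ≤ (1 + 2 * γ) / μ - (2 + γ) * γ / (1 + γ) / L := by
    have hs : (1 + γ) * (‖s‖ ^ 2 / ⟪s, y⟫) ≤ (1 + γ) * μ⁻¹ := by gcongr
    have hτ : γ / (1 + γ) * L⁻¹ ≤ γ / (1 + γ) * τ := by gcongr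
    have hμL' : 0 ≤ γ * (μ⁻¹ - L⁻¹) := mul_nonneg hγ.le (sub_nonneg.2 (inv_anti₀ hμ hμL))
    have : (1 + 2 * γ) / μ - (2 + γ) * γ / (1 + γ) / L
        = (1 + γ) * μ⁻¹ - γ / (1 + γ) * L⁻¹ + γ * (μ⁻¹ - L⁻¹) := by
      field_simp
      ring
    linarith
  have hcs : ⟪u, v⟫ ^ 2 ≤ ‖u‖ ^ 2 * ‖v‖ ^ 2 := by
    have := pow_le_pow_left₀ (abs_nonneg _) (abs_real_inner_le_norm u v) 2
    rwa [sq_abs, mul_pow] at this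
  calc γ * τ * ‖v‖ ^ 2 + ρ * (1 + γ) * ⟪u, v⟫ ^ 2 - ρ * γ ^ 2 * τ ^ 2 / (1 + γ) * ⟪y, v⟫ ^ 2
      ≤ γ * τ * ‖v‖ ^ 2 + ρ * (1 + γ) * (‖u‖ ^ 2 * ‖v‖ ^ 2) := by
        have : 0 ≤ ρ * γ ^ 2 * τ ^ 2 / (1 + γ) * ⟪y, v⟫ ^ 2 := by positivity
        have : ρ * (1 + γ) * ⟪u, v⟫ ^ 2 ≤ ρ * (1 + γ) * (‖u‖ ^ 2 * ‖v‖ ^ 2) := by gcongr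
        linarith
    _ = (γ * τ + ρ * (1 + γ) * ‖u‖ ^ 2) * ‖v‖ ^ 2 := by ring
    _ ≤ _ := by gcongr

end ZeroMemoryBFGS

section LoewnerBounds

variable {n : Type*} [Fintype n] [DecidableEq n]

theorem Matrix.posSemidef_sub_smul_one_of_le {A : Matrix n n ℝ} (hA : A.IsHermitian) {c : ℝ}
    (h : ∀ v, c * (v ⬝ᵥ v) ≤ v ⬝ᵥ (A *ᵥ v)) : (A - c • (1 : Matrix n n ℝ)).PosSemidef := by
  refine .of_dotProduct_mulVec_nonneg (hA.sub (isHermitian_one.smul (.all c))) fun v => ?_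
  simpa [sub_mulVec, smul_mulVec] using h v

theorem Matrix.posSemidef_smul_one_sub_of_le {A : Matrix n n ℝ} (hA : A.IsHermitian) {c : ℝ}
    (h : ∀ v, v ⬝ᵥ (A *ᵥ v) ≤ c * (v ⬝ᵥ v)) : (c • (1 : Matrix n n ℝ) - A).PosSemidef := by
  refine .of_dotProduct_mulVec_nonneg ((isHermitian_one.smul (.all c)).sub hA) fun v => ?_
  simpa [sub_mulVec, smul_mulVec] using h v

theorem Matrix.isHermitian_smul_one_add_smul_vecMulVec_sub_smul_vecMulVec (c d e : ℝ)
    (u y : n → ℝ) : (c • (1 : Matrix n n ℝ) + d • vecMulVec u u - e • vecMulVec y y).IsHermitian :=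
  ((isHermitian_one.smul (.all c)).add
    ((posSemidef_vecMulVec_self_star u).isHermitian.smul (.all d))).sub
    ((posSemidef_vecMulVec_self_star y).isHermitian.smul (.all e))

theorem Matrix.dotProduct_smul_one_add_smul_vecMulVec_sub_smul_vecMulVec_mulVec (c d e : ℝ)
    (u y v : n → ℝ) :
    v ⬝ᵥ ((c • (1 : Matrix n n ℝ) + d • vecMulVec u u - e • vecMulVec y y) *ᵥ v)
      = c * (v ⬝ᵥ v) + d * (u ⬝ᵥ v) ^ 2 - e * (y ⬝ᵥ v) ^ 2 := by
  simp [sub_mulVec, add_mulVec, smul_mulVec, vecMulVec_mulVec, dotProduct_comm v, sq]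

end LoewnerBounds

section EuclideanTransfer

open WithLp

theorem dotProduct_eq_inner_toLp {n : Type*} [Fintype n] (x y : n → ℝ) :
    x ⬝ᵥ y = ⟪toLp 2 x, toLp 2 y⟫ := by
  simp [EuclideanSpace.inner_toLp_toLp, dotProduct_comm]

theorem dotProduct_self_eq_norm_toLp_sq {n : Type*} [Fintype n] (x : n → ℝ) :
    x ⬝ᵥ x = ‖toLp 2 x‖ ^ 2 := by
  rw [dotProduct_eq_inner_toLp, real_inner_self_eq_norm_sq]

variable {N : ℕ}

theorem euNorm_eq_norm_toLp (x : Fin N → ℝ) : euNorm x = ‖toLp 2 x‖ := by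
  rw [euNorm, dotProduct_self_eq_norm_toLp_sq, Real.sqrt_sq (norm_nonneg _)]

theorem HasFDerivAt.comp_ofLp {f : (Fin N → ℝ) → ℝ} {w : Fin N → ℝ}
    {z : EuclideanSpace ℝ (Fin N)} (hf : HasFDerivAt f (dotCLM w) (ofLp z)) :
    HasFDerivAt (fun z : EuclideanSpace ℝ (Fin N) => f (ofLp z)) (innerSL ℝ (toLp 2 w)) z := by
  refine (hf.comp z (EuclideanSpace.equiv (Fin N) ℝ).hasFDerivAt).congr_fderiv ?_
  ext v
  simp only [dotCLM, dotProduct_eq_inner_toLp, ContinuousLinearMap.comp_apply,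
    ContinuousLinearEquiv.coe_coe, LinearMap.coe_toContinuousLinearMap', LinearMap.coe_mk,
    AddHom.coe_mk, coe_innerSL_apply]
  rfl

theorem StrongConvexOn.comp_ofLp {f : (Fin N → ℝ) → ℝ} {μ : ℝ}
    (hsc : ConvexOn ℝ Set.univ fun z => f z - μ / 2 * (z ⬝ᵥ z)) :
    StrongConvexOn Set.univ μ fun z : EuclideanSpace ℝ (Fin N) => f (ofLp z) := by
  have h := hsc.comp_linearMap (EuclideanSpace.equiv (Fin N) ℝ).toLinearMap
  simp only [LinearEquiv.coe_coe, ContinuousLinearEquiv.coe_toLinearEquiv, Set.preimage_univ,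
    dotProduct_self_eq_norm_toLp_sq, Function.comp_def] at h
  exact strongConvexOn_iff_convex.2 h

theorem secant_inner_bounds {μ L : ℝ} (hμ : 0 < μ) (hL : 0 < L) {f : (Fin N → ℝ) → ℝ}
    {f' : (Fin N → ℝ) → Fin N → ℝ} (hdiff : ∀ z, HasFDerivAt f (dotCLM (f' z)) z)
    (hsc : ConvexOn ℝ Set.univ fun z => f z - μ / 2 * (z ⬝ᵥ z))
    (hlip : ∀ z w, euNorm (f' z - f' w) ≤ L * euNorm (z - w)) (x x' : Fin N → ℝ) :
    μ * ‖toLp 2 (x - x')‖ ^ 2 ≤ ⟪toLp 2 (x - x'), toLp 2 (f' x - f' x')⟫ ∧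
      ‖toLp 2 (f' x - f' x')‖ ^ 2 ≤ L * ⟪toLp 2 (x - x'), toLp 2 (f' x - f' x')⟫ := by
  set F' : EuclideanSpace ℝ (Fin N) → EuclideanSpace ℝ (Fin N) := fun z => toLp 2 (f' (ofLp z))
  have hF : ∀ z, HasFDerivAt (fun z => f (ofLp z)) (innerSL ℝ (F' z)) z :=
    fun z => (hdiff _).comp_ofLp
  have hFsc := StrongConvexOn.comp_ofLp hsc
  have hFlip : ∀ z w, ‖F' z - F' w‖ ≤ L * ‖z - w‖ := fun z w => by
    simpa [F', euNorm_eq_norm_toLp] using hlip (ofLp z) (ofLp w)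
  have hs : toLp 2 (x - x') = toLp 2 x - toLp 2 x' := toLp_sub 2 x x'
  have hy : toLp 2 (f' x - f' x') = F' (toLp 2 x) - F' (toLp 2 x') := toLp_sub 2 _ _
  rw [hs, hy, real_inner_comm]
  exact ⟨hFsc.mul_norm_sub_sq_le_inner hF _ _,
    (strongConvexOn_zero.1 (hFsc.mono hμ.le)).norm_sub_sq_le_mul_inner hL hF hFlip _ _⟩

end EuclideanTransfer

/-- Eigenvalue bounds for the zero-memory BFGS inverse-Hessian
approximation `H = γτ·Id + ρ(1+γ) u_γ u_γᵀ - ργ²τ²/(1+γ) y yᵀ` with `ρ = 1/⟨s,y⟩`,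
`τ = ⟨s,y⟩/‖y‖²`, `u_γ = s - (γτ/(1+γ)) y`: `a·Id ⪯ H ⪯ b·Id` with
`a = (γ/(1+γ))/L > 0` and `b = (1+2γ)/μ - ((2+γ)γ/(1+γ))/L`. -/
theorem stmt_12 {N : ℕ} (μ L γ : ℝ) (hμ : 0 < μ) (hμL : μ ≤ L) (hγ : 0 < γ)
    (f : (Fin N → ℝ) → ℝ) (f' : (Fin N → ℝ) → Fin N → ℝ)
    (hdiff : ∀ z : Fin N → ℝ, HasFDerivAt f (dotCLM (f' z)) z)
    (hsc : ConvexOn ℝ Set.univ fun z => f z - μ / 2 * (z ⬝ᵥ z))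
    (hlip : ∀ z w : Fin N → ℝ, euNorm (f' z - f' w) ≤ L * euNorm (z - w))
    (x x' : Fin N → ℝ) (hne : x ≠ x')
    (s y : Fin N → ℝ) (hs : s = x - x') (hy : y = f' x - f' x')
    (ρ τ : ℝ) (hρ : ρ = (s ⬝ᵥ y)⁻¹) (hτ : τ = (s ⬝ᵥ y) / (y ⬝ᵥ y))
    (uγ : Fin N → ℝ) (huγ : uγ = s - (γ * τ / (1 + γ)) • y)
    (H : Matrix (Fin N) (Fin N) ℝ)
    (hH : H = (γ * τ) • (1 : Matrix (Fin N) (Fin N) ℝ)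
        + (ρ * (1 + γ)) • vecMulVec uγ uγ
        - (ρ * γ ^ 2 * τ ^ 2 / (1 + γ)) • vecMulVec y y)
    (a b : ℝ) (ha : a = γ / (1 + γ) / L)
    (hb : b = (1 + 2 * γ) / μ - (2 + γ) * γ / (1 + γ) / L) :
    (H - a • (1 : Matrix (Fin N) (Fin N) ℝ)).PosSemidef ∧
    (b • (1 : Matrix (Fin N) (Fin N) ℝ) - H).PosSemidef := by
  obtain ⟨hμs, hyL⟩ := secant_inner_bounds hμ (hμ.trans_le hμL) hdiff hsc hlip x x'
  rw [← hs, ← hy] at hμs hyL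
  have hsy : 0 < ⟪WithLp.toLp 2 s, .toLp 2 y⟫ := by
    have : WithLp.toLp 2 s ≠ 0 := by simpa [hs, sub_eq_zero] using hne
    exact (mul_pos hμ (by positivity)).trans_le hμs
  rw [dotProduct_self_eq_norm_toLp_sq, dotProduct_eq_inner_toLp] at hτ
  rw [dotProduct_eq_inner_toLp] at hρ
  have hu : WithLp.toLp 2 uγ = .toLp 2 s - (γ * τ / (1 + γ)) • .toLp 2 y := by simp [huγ]
  have hquad : ∀ v, v ⬝ᵥ (H *ᵥ v) = γ * τ * ‖WithLp.toLp 2 v‖ ^ 2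
      + ρ * (1 + γ) * ⟪WithLp.toLp 2 uγ, .toLp 2 v⟫ ^ 2
      - ρ * γ ^ 2 * τ ^ 2 / (1 + γ) * ⟪WithLp.toLp 2 y, .toLp 2 v⟫ ^ 2 := fun v => by
    rw [hH, dotProduct_smul_one_add_smul_vecMulVec_sub_smul_vecMulVec_mulVec,
      dotProduct_self_eq_norm_toLp_sq, dotProduct_eq_inner_toLp uγ, dotProduct_eq_inner_toLp y]
  have hHerm : H.IsHermitian := hH ▸ isHermitian_smul_one_add_smul_vecMulVec_sub_smul_vecMulVec ..
  constructor
  · refine posSemidef_sub_smul_one_of_le hHerm fun v => ?_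
    rw [hquad, dotProduct_self_eq_norm_toLp_sq, ha]
    exact le_zeroMemoryBFGS_quadratic hγ hsy hyL hρ hτ hu _
  · refine posSemidef_smul_one_sub_of_le hHerm fun v => ?_
    rw [hquad, dotProduct_self_eq_norm_toLp_sq, hb]
    exact zeroMemoryBFGS_quadratic_le hμ hμL hγ hsy hμs hyL hρ hτ hu _
end
end

section
/- (Toland duality.) Let h ∈ Γ₀(ℝ^N) and let g : ℝ^N → ℝ be convex (finite-valued, hence continuous). Then inf_{x ∈ ℝ^N} ( h(x) − g(x) ) = inf_{u ∈ ℝ^N} ( g*(u) − h*(u) ), where both infima are taken in ℝ ∪ {±∞} and on the dual side the convention (+∞) − (+∞) = +∞ is used (note h*(u) > −∞ for all u since h is proper). -/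
/-!
Weak duality: `g x ≥ ⟨u, x⟩ - g* u` gives `h x - g x ≤ g* u - (⟨u, x⟩ - h x)`, and the infimum
over `x` of the right-hand side is `g* u - h* u`. Conversely, a finite convex function on `ℝ^N`
has a subgradient `u` at every `x` (a hyperplane supporting its open strict epigraph at
`(x, g x)`), so `g* u = ⟨u, x⟩ - g x`, while `h* u ≥ ⟨u, x⟩ - h x`; hence
`g* u - h* u ≤ h x - g x`.
-/

open Matrix

noncomputable section

/-- `p` is the proximal point of `h` at `x` in the metric induced by `V`, i.e. `p`
minimizes `z ↦ h z + (1/2)‖x - z‖²_V` (with `‖w‖²_V = ⟨w, V w⟩`). -/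
def IsProxPt {N : ℕ} (V : Matrix (Fin N) (Fin N) ℝ) (h : (Fin N → ℝ) → EReal)
    (x p : Fin N → ℝ) : Prop :=
  ∀ z : Fin N → ℝ,
    h p + ((1 / 2 * ((x - p) ⬝ᵥ (V *ᵥ (x - p))) : ℝ) : EReal) ≤
      h z + ((1 / 2 * ((x - z) ⬝ᵥ (V *ᵥ (x - z))) : ℝ) : EReal)

/-- `h` belongs to `Γ₀(ℝ^N)`: proper, never `-∞`, lower semicontinuous and convex. -/
def Gamma0 {N : ℕ} (h : (Fin N → ℝ) → EReal) : Prop :=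
  (∃ z, h z ≠ ⊤) ∧ (∀ z, h z ≠ ⊥) ∧ LowerSemicontinuous h ∧
    ∀ x y : Fin N → ℝ, ∀ t : ℝ, 0 ≤ t → t ≤ 1 →
      h (t • x + (1 - t) • y) ≤ (t : EReal) * h x + ((1 - t : ℝ) : EReal) * h y

open scoped Classical

/-- Fenchel conjugate `h*(v) = sup_x ⟨v,x⟩ - h(x)` of an extended-real-valued function. -/
def fconj {N : ℕ} (h : (Fin N → ℝ) → EReal) (v : Fin N → ℝ) : EReal :=
  ⨆ x : Fin N → ℝ, ((v ⬝ᵥ x : ℝ) : EReal) - h x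

/-- Fenchel conjugate of a real-valued function. -/
def fconjR {N : ℕ} (g : (Fin N → ℝ) → ℝ) (v : Fin N → ℝ) : EReal :=
  ⨆ x : Fin N → ℝ, ((v ⬝ᵥ x - g x : ℝ) : EReal)

namespace EReal

lemma le_coe_sub_comm {x y : EReal} {a : ℝ} : x ≤ a - y ↔ y ≤ a - x := by
  rw [le_sub_iff_add_le (.inr (coe_ne_bot a)) (.inr (coe_ne_top a)),
    le_sub_iff_add_le (.inr (coe_ne_bot a)) (.inr (coe_ne_top a)), add_comm]

lemma coe_sub_iSup {ι : Sort*} (a : ℝ) (f : ι → EReal) :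
    (a : EReal) - ⨆ i, f i = ⨅ i, (a - f i) :=
  le_antisymm (le_iInf fun i => sub_le_sub le_rfl (le_iSup f i))
    (le_coe_sub_comm.mp (iSup_le fun i => le_coe_sub_comm.mp (iInf_le _ i)))

end EReal

section Conjugate

variable {N : ℕ}

lemma le_fconjR (g : (Fin N → ℝ) → ℝ) (u x : Fin N → ℝ) :
    ((u ⬝ᵥ x - g x : ℝ) : EReal) ≤ fconjR g u :=
  le_iSup (fun y => ((u ⬝ᵥ y - g y : ℝ) : EReal)) x

lemma le_fconj (h : (Fin N → ℝ) → EReal) (u x : Fin N → ℝ) :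
    ((u ⬝ᵥ x : ℝ) : EReal) - h x ≤ fconj h u :=
  le_iSup (fun y => ((u ⬝ᵥ y : ℝ) : EReal) - h y) x

lemma fconjR_ne_bot (g : (Fin N → ℝ) → ℝ) (u : Fin N → ℝ) : fconjR g u ≠ ⊥ :=
  ne_bot_of_le_ne_bot (EReal.coe_ne_bot _) (le_fconjR g u 0)

lemma fconjR_eq_of_forall_le {g : (Fin N → ℝ) → ℝ} {u x : Fin N → ℝ}
    (hx : ∀ y, u ⬝ᵥ y - g y ≤ u ⬝ᵥ x - g x) : fconjR g u = ((u ⬝ᵥ x - g x : ℝ) : EReal) :=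
  le_antisymm (iSup_le fun y => EReal.coe_le_coe (hx y)) (le_fconjR g u x)

lemma ConvexOn.exists_forall_dotProduct_sub_le {g : (Fin N → ℝ) → ℝ}
    (hg : ConvexOn ℝ Set.univ g) (x : Fin N → ℝ) :
    ∃ u, ∀ y, u ⬝ᵥ y - g y ≤ u ⬝ᵥ x - g x := by
  have hgc : Continuous g := continuousOn_univ.mp (hg.continuousOn isOpen_univ)
  have hopen : IsOpen {p : (Fin N → ℝ) × ℝ | p.1 ∈ Set.univ ∧ g p.1 < p.2} := by
    simpa using isOpen_lt (hgc.comp continuous_fst) continuous_snd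
  obtain ⟨f, hf⟩ := geometric_hahn_banach_open_point hg.convex_strict_epigraph hopen
    (x := (x, g x)) (by simp)
  set v := (dotProductEquiv ℝ (Fin N)).symm (f.toLinearMap.comp (LinearMap.inl ℝ _ ℝ))
  set c := f (0, 1)
  have hf_apply : ∀ y r, f (y, r) = v ⬝ᵥ y + r * c := by
    intro y r
    have hv : f (y, 0) = v ⬝ᵥ y := by
      rw [← dotProductEquiv_apply_apply, LinearEquiv.apply_symm_apply]
      rfl
    rw [show (y, r) = (y, 0) + r • ((0 : Fin N → ℝ), (1 : ℝ)) by simp, map_add, map_smul, hv,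
      smul_eq_mul]
  have hc : c < 0 := by
    have := hf (x, g x + 1) (by simp)
    rw [hf_apply, hf_apply] at this
    linarith
  refine ⟨(-c)⁻¹ • v, fun y => ?_⟩
  -- `(y, g y)` is a limit of points `(y, g y + t)`, `t > 0`, of the strict epigraph.
  have hsupport : v ⬝ᵥ y + g y * c ≤ v ⬝ᵥ x + g x * c := by
    refine le_of_forall_pos_lt_add fun ε hε => ?_
    have hεc : 0 < ε / -c := div_pos hε (neg_pos.mpr hc)
    have := hf (y, g y + ε / -c) (by simpa using hεc)
    rw [hf_apply, hf_apply, add_mul, div_mul_eq_mul_div, div_neg,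
      mul_div_cancel_right₀ _ hc.ne] at this
    linarith
  have hscaled := mul_le_mul_of_nonneg_left hsupport (inv_nonneg.mpr (neg_nonneg.mpr hc.le))
  have hinv : (-c)⁻¹ * c = -1 := by rw [inv_neg, neg_mul, inv_mul_cancel₀ hc.ne]
  rw [smul_dotProduct, smul_dotProduct, smul_eq_mul, smul_eq_mul]
  linear_combination hscaled + (g x - g y) * hinv

lemma ConvexOn.exists_fconjR_eq {g : (Fin N → ℝ) → ℝ} (hg : ConvexOn ℝ Set.univ g)
    (x : Fin N → ℝ) : ∃ u, fconjR g u = ((u ⬝ᵥ x - g x : ℝ) : EReal) :=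
  (hg.exists_forall_dotProduct_sub_le x).imp fun _ hu => fconjR_eq_of_forall_le hu

lemma iInf_sub_le_coe_sub_fconj {h : (Fin N → ℝ) → EReal} {g : (Fin N → ℝ) → ℝ}
    {u : Fin N → ℝ} {a : ℝ} (ha : fconjR g u = a) :
    ⨅ x, h x - ((g x : ℝ) : EReal) ≤ (a : EReal) - fconj h u := by
  rw [fconj, EReal.coe_sub_iSup]
  refine iInf_mono fun x => ?_
  have hgx : u ⬝ᵥ x - g x ≤ a := EReal.coe_le_coe_iff.mp (ha ▸ le_fconjR g u x)
  induction h x with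
  | bot => simp
  | top => simp
  | coe r =>
    norm_cast
    linarith

lemma coe_dotProduct_sub_sub_fconj_le (h : (Fin N → ℝ) → EReal) (u x : Fin N → ℝ) (c : ℝ) :
    ((u ⬝ᵥ x - c : ℝ) : EReal) - fconj h u ≤ h x - c :=
  calc ((u ⬝ᵥ x - c : ℝ) : EReal) - fconj h u
      ≤ ((u ⬝ᵥ x - c : ℝ) : EReal) - (((u ⬝ᵥ x : ℝ) : EReal) - h x) :=
        EReal.sub_le_sub le_rfl (le_fconj h u x)
    _ = h x - c := by
      induction h x with
      | bot => simp
      | top => rw [EReal.sub_top, EReal.coe_sub_bot, EReal.top_sub_coe]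
      | coe r =>
        norm_cast
        ring

end Conjugate

theorem stmt_16_general {N : ℕ} (h : (Fin N → ℝ) → EReal)
    (g : (Fin N → ℝ) → ℝ) (hg : ConvexOn ℝ Set.univ g) :
    (⨅ x : Fin N → ℝ, h x - ((g x : ℝ) : EReal)) =
      ⨅ u : Fin N → ℝ,
        if fconjR g u = ⊤ ∧ fconj h u = ⊤ then (⊤ : EReal)
        else fconjR g u - fconj h u := by
  apply le_antisymm
  · refine le_iInf fun u => ?_
    split_ifs with hboth
    · exact le_top
    by_cases hgu : fconjR g u = ⊤
    · rw [hgu, EReal.top_sub fun hhu => hboth ⟨hgu, hhu⟩]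
      exact le_top
    lift fconjR g u to ℝ using ⟨hgu, fconjR_ne_bot g u⟩ with a ha
    exact iInf_sub_le_coe_sub_fconj ha.symm
  · refine le_iInf fun x => ?_
    obtain ⟨u, hu⟩ := hg.exists_fconjR_eq x
    refine iInf_le_of_le u ?_
    rw [if_neg fun hboth => EReal.coe_ne_top _ (hu ▸ hboth.1), hu]
    exact coe_dotProduct_sub_sub_fconj_le h u x (g x)

/-- (Toland duality.) For `h ∈ Γ₀(ℝ^N)` and `g : ℝ^N → ℝ` convex
(finite-valued): `inf_x (h(x) - g(x)) = inf_u (g*(u) - h*(u))`, where on the dual side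
the convention `(+∞) - (+∞) = +∞` is used (note `h*(u) > -∞` always, as `h` is proper). -/
theorem stmt_16 {N : ℕ} (h : (Fin N → ℝ) → EReal) (hh : Gamma0 h)
    (g : (Fin N → ℝ) → ℝ) (hg : ConvexOn ℝ Set.univ g) :
    (⨅ x : Fin N → ℝ, h x - ((g x : ℝ) : EReal)) =
      ⨅ u : Fin N → ℝ,
        if fconjR g u = ⊤ ∧ fconj h u = ⊤ then (⊤ : EReal)
        else fconjR g u - fconj h u :=
  stmt_16_general h g hg
end
end

section
/- Let D be a diagonal N×N matrix with strictly positive diagonal entries, u ∈ ℝ^N, and assume V = D + u u^T (respectively V = D − u u^T) is symmetric positive definite. Let A be an M×N real matrix and b ∈ ℝ^M with {x : A x = b} nonempty, and let h be the indicator function of {x : A x = b}. Set Y = A D^{-1/2}, let Π be the orthogonal projector onto Ker(Y), and c = Y⁺ b, where Y⁺ is the Moore–Penrose pseudo-inverse. Then: (i) for every z ∈ ℝ^N, prox_{h∘D^{-1/2}}(z) = Π z + c; and (ii) for every x ∈ ℝ^N, the unique root of the function L(α) = ⟨u, x − D^{-1/2}( prox_{h∘D^{-1/2}}( D^{1/2}(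 x ∓ α D^{-1} u ) ) )⟩ + α (sign − for V = D + u u^T, sign + for V = D − u u^T) is α* = ⟨u, D^{-1/2}( c − (Id − Π) D^{1/2} x )⟩ / ( 1 ± ⟨u, D^{-1/2} Π D^{-1/2} u⟩ ) (sign + in the denominator for V = D + u u^T, sign − for V = D − u u^T). -/
/-!
The set `{w | Y w = b}` is the image of `{z | A z = b}` under `D^{1/2}`, so `h ∘ D^{-1/2}` is its
indicator and its prox is the orthogonal projection onto it. That projection is `Π z + c`:
`c = Y⁺ b` is feasible (as `b ∈ range Y`) and orthogonal to `Ker Y` (as `Y⁺ Y` is symmetric).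
Substituting this affine formula makes `L` affine in `α` with slope `1 + ε q`, where
`q = ‖Π D^{-1/2} u‖²`. Evaluating the quadratic form of `V = D + ε u uᵀ` at
`t = D^{-1/2} Π D^{-1/2} u` gives `tᵀ V t = q (1 + ε q)`, so the slope is positive whenever
`q ≠ 0`, and `L` has exactly one root.
-/

open Matrix

noncomputable section

/-- `Ap` is the Moore–Penrose pseudo-inverse of `A` (Penrose equations). -/
def IsMoorePenrose {m n : ℕ} (A : Matrix (Fin m) (Fin n) ℝ)
    (Ap : Matrix (Fin n) (Fin m) ℝ) : Prop :=
  A * Ap * A = A ∧ Ap * A * Ap = Ap ∧ (A * Ap)ᵀ = A * Ap ∧ (Ap * A)ᵀ = Ap * A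

namespace Matrix

variable {ι κ : Type*} [Fintype ι]

lemma mulVec_dotProduct_of_transpose_eq {P : Matrix ι ι ℝ} (hP : Pᵀ = P) (a b : ι → ℝ) :
    (P *ᵥ a) ⬝ᵥ b = a ⬝ᵥ (P *ᵥ b) := by
  rw [dotProduct_mulVec, ← mulVec_transpose, hP]

lemma dotProduct_mulVec_self_of_idempotent {P : Matrix ι ι ℝ} (hP₁ : Pᵀ = P) (hP₂ : P * P = P)
    (v : ι → ℝ) : v ⬝ᵥ (P *ᵥ v) = (P *ᵥ v) ⬝ᵥ (P *ᵥ v) := by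
  rw [mulVec_dotProduct_of_transpose_eq hP₁, mulVec_mulVec, hP₂]

lemma dotProduct_self_nonneg (v : ι → ℝ) : 0 ≤ v ⬝ᵥ v := by
  simpa using dotProduct_star_self_nonneg v

lemma dotProduct_self_sub_of_dotProduct_eq_zero {a b : ι → ℝ} (h : a ⬝ᵥ b = 0) :
    (a - b) ⬝ᵥ (a - b) = a ⬝ᵥ a + b ⬝ᵥ b := by
  rw [sub_dotProduct, dotProduct_sub, dotProduct_sub, dotProduct_comm b a, h]
  ring

lemma dotProduct_diagonal_add_smul_vecMulVec_mulVec [DecidableEq ι] (d u t : ι → ℝ) (ε : ℝ) :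
    t ⬝ᵥ ((diagonal d + ε • vecMulVec u u) *ᵥ t) =
      t ⬝ᵥ (diagonal d *ᵥ t) + ε * (u ⬝ᵥ t) ^ 2 := by
  rw [add_mulVec, smul_mulVec, vecMulVec_mulVec, dotProduct_add, dotProduct_smul,
    dotProduct_smul, dotProduct_comm t u]
  simp only [op_smul_eq_smul, smul_eq_mul]
  ring

lemma sub_mulVec_add_dotProduct_eq_zero [Fintype κ] {Y : Matrix κ ι ℝ} {P : Matrix ι ι ℝ}
    (hP : Pᵀ = P) (hPker : ∀ v, Y *ᵥ v = 0 → P *ᵥ v = v) {c : ι → ℝ}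
    (hc : ∀ k, Y *ᵥ k = 0 → c ⬝ᵥ k = 0) (z : ι → ℝ) {k : ι → ℝ} (hk : Y *ᵥ k = 0) :
    (z - (P *ᵥ z + c)) ⬝ᵥ k = 0 := by
  rw [sub_add_eq_sub_sub, sub_dotProduct, sub_dotProduct, mulVec_dotProduct_of_transpose_eq hP,
    hPker k hk, hc k hk, sub_self, sub_zero]

section DiagonalSqrt

variable [DecidableEq ι] {d : ι → ℝ}

lemma diagonal_inv_sqrt_mul_diagonal_sqrt (hd : ∀ i, 0 < d i) :
    (diagonal fun i => (√(d i))⁻¹) * diagonal (fun i => √(d i)) = 1 := by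
  rw [diagonal_mul_diagonal, ← diagonal_one]
  congr 1
  funext i
  exact inv_mul_cancel₀ (Real.sqrt_pos.mpr (hd i)).ne'

lemma diagonal_inv_sqrt_mulVec_diagonal_sqrt_mulVec (hd : ∀ i, 0 < d i) (v : ι → ℝ) :
    (diagonal fun i => (√(d i))⁻¹) *ᵥ (diagonal (fun i => √(d i)) *ᵥ v) = v := by
  rw [mulVec_mulVec, diagonal_inv_sqrt_mul_diagonal_sqrt hd, one_mulVec]

lemma diagonal_sqrt_mul_diagonal_inv (hd : ∀ i, 0 < d i) :
    (diagonal fun i => √(d i)) * diagonal (fun i => (d i)⁻¹) =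
      diagonal fun i => (√(d i))⁻¹ := by
  rw [diagonal_mul_diagonal]
  congr 1
  funext i
  have hs := Real.sqrt_pos.mpr (hd i)
  have := (hd i).ne'
  field_simp
  rw [Real.sq_sqrt (hd i).le]

lemma diagonal_mul_diagonal_inv_sqrt (hd : ∀ i, 0 < d i) :
    diagonal d * diagonal (fun i => (√(d i))⁻¹) = diagonal fun i => √(d i) := by
  rw [diagonal_mul_diagonal]
  congr 1
  funext i
  have hs := Real.sqrt_pos.mpr (hd i)
  have := (hd i).ne'
  field_simp
  rw [Real.sq_sqrt (hd i).le]

lemma one_add_mul_dotProduct_pos_of_posDef (hd : ∀ i, 0 < d i) {u : ι → ℝ} {ε : ℝ}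
    (hV : (diagonal d + ε • vecMulVec u u).PosDef) {P : Matrix ι ι ℝ} (hP₁ : Pᵀ = P)
    (hP₂ : P * P = P) :
    0 < 1 + ε * (u ⬝ᵥ ((diagonal fun i => (√(d i))⁻¹) *ᵥ
      (P *ᵥ ((diagonal fun i => (√(d i))⁻¹) *ᵥ u)))) := by
  have hST : (diagonal fun i => (√(d i))⁻¹)ᵀ = diagonal fun i => (√(d i))⁻¹ :=
    diagonal_transpose _
  generalize hp : P *ᵥ ((diagonal fun i => (√(d i))⁻¹) *ᵥ u) = p
  have hq : u ⬝ᵥ ((diagonal fun i => (√(d i))⁻¹) *ᵥ p) = p ⬝ᵥ p := by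
    rw [← mulVec_dotProduct_of_transpose_eq hST, ← hp,
      dotProduct_mulVec_self_of_idempotent hP₁ hP₂]
  generalize ht : (diagonal fun i => (√(d i))⁻¹) *ᵥ p = t at hq ⊢
  have hDt : t ⬝ᵥ (diagonal d *ᵥ t) = p ⬝ᵥ p := by
    rw [← ht, mulVec_mulVec, diagonal_mul_diagonal_inv_sqrt hd,
      mulVec_dotProduct_of_transpose_eq hST, diagonal_inv_sqrt_mulVec_diagonal_sqrt_mulVec hd]
  rcases (dotProduct_self_nonneg p).eq_or_lt' with hp0 | hppos
  · rw [hq, hp0]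
    norm_num
  have htne : t ≠ 0 := by
    rintro rfl
    rw [dotProduct_zero] at hq
    exact hppos.ne hq
  have hform := hV.dotProduct_mulVec_pos htne
  rw [star_trivial, dotProduct_diagonal_add_smul_vecMulVec_mulVec, hDt, ← hq] at hform
  rw [← hq] at hppos
  nlinarith

end DiagonalSqrt

end Matrix

namespace IsMoorePenrose

variable {m n : ℕ} {Y : Matrix (Fin m) (Fin n) ℝ} {Yp : Matrix (Fin n) (Fin m) ℝ}
  {b : Fin m → ℝ} {v : Fin n → ℝ}

lemma mulVec_mulVec_eq (hYp : IsMoorePenrose Y Yp) (hv : Y *ᵥ v = b) :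
    Y *ᵥ (Yp *ᵥ b) = b := by
  rw [← hv, mulVec_mulVec, mulVec_mulVec, hYp.1]

lemma dotProduct_eq_zero_of_mulVec_eq_zero (hYp : IsMoorePenrose Y Yp) (hv : Y *ᵥ v = b)
    {k : Fin n → ℝ} (hk : Y *ᵥ k = 0) : (Yp *ᵥ b) ⬝ᵥ k = 0 := by
  rw [← hv, mulVec_mulVec, mulVec_dotProduct_of_transpose_eq hYp.2.2.2, ← mulVec_mulVec, hk,
    mulVec_zero, dotProduct_zero]

end IsMoorePenrose

namespace IsProxPt

variable {N : ℕ} {S : Set (Fin N → ℝ)} {g : (Fin N → ℝ) → EReal} {z p q : Fin N → ℝ}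

lemma eq_of_forall_dotProduct_eq_zero (hq : IsProxPt 1 g z q) (hgS : ∀ w ∈ S, g w = 0)
    (hgSc : ∀ w ∉ S, g w = ⊤) (hp : p ∈ S) (horth : ∀ v ∈ S, (z - p) ⬝ᵥ (v - p) = 0) :
    q = p := by
  have H := hq p
  simp only [one_mulVec, hgS p hp, zero_add] at H
  have hqS : q ∈ S := by
    by_contra hqS
    rw [hgSc q hqS, EReal.top_add_coe, top_le_iff] at H
    exact EReal.coe_ne_top _ H
  rw [hgS q hqS, zero_add, EReal.coe_le_coe_iff] at H
  have hpyth : (z - q) ⬝ᵥ (z - q) = (z - p) ⬝ᵥ (z - p) + (q - p) ⬝ᵥ (q - p) := by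
    rw [show z - q = (z - p) - (q - p) by abel,
      dotProduct_self_sub_of_dotProduct_eq_zero (horth q hqS)]
  have hqp : (q - p) ⬝ᵥ (q - p) = 0 :=
    le_antisymm (by linarith) (dotProduct_self_nonneg _)
  exact sub_eq_zero.mp (dotProduct_self_eq_zero.mp hqp)

lemma eq_mulVec_add_mulVec_of_isMoorePenrose {m : ℕ} {Y : Matrix (Fin m) (Fin N) ℝ}
    {Yp : Matrix (Fin N) (Fin m) ℝ} {b : Fin m → ℝ} {P : Matrix (Fin N) (Fin N) ℝ}
    (hq : IsProxPt 1 g z q) (hg : ∀ w, Y *ᵥ w = b → g w = 0) (hg' : ∀ w, Y *ᵥ w ≠ b → g w = ⊤)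
    (hb : ∃ v, Y *ᵥ v = b) (hP : Pᵀ = P) (hPY : ∀ v, Y *ᵥ (P *ᵥ v) = 0)
    (hPker : ∀ v, Y *ᵥ v = 0 → P *ᵥ v = v) (hYp : IsMoorePenrose Y Yp) :
    q = P *ᵥ z + Yp *ᵥ b := by
  obtain ⟨v₀, hv₀⟩ := hb
  have hfeas : Y *ᵥ (P *ᵥ z + Yp *ᵥ b) = b := by
    rw [mulVec_add, hPY, hYp.mulVec_mulVec_eq hv₀, zero_add]
  refine hq.eq_of_forall_dotProduct_eq_zero (S := {w | Y *ᵥ w = b}) hg hg' hfeas fun v hv => ?_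
  refine sub_mulVec_add_dotProduct_eq_zero hP hPker
    (fun k hk => hYp.dotProduct_eq_zero_of_mulVec_eq_zero hv₀ hk) z ?_
  rw [mulVec_sub, hfeas, show Y *ᵥ v = b from hv, sub_self]

end IsProxPt

theorem stmt_18_general {N M : ℕ}
    (d : Fin N → ℝ) (hd : ∀ i, 0 < d i)
    (u : Fin N → ℝ)
    (ε : ℝ)
    (V : Matrix (Fin N) (Fin N) ℝ)
    (hV : V = Matrix.diagonal d + ε • vecMulVec u u) (hVpd : V.PosDef)
    (A : Matrix (Fin M) (Fin N) ℝ) (b : Fin M → ℝ) (hfeas : ∃ z, A *ᵥ z = b)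
    (h : (Fin N → ℝ) → EReal)
    (hind : ∀ z : Fin N → ℝ, (A *ᵥ z = b → h z = 0) ∧ (A *ᵥ z ≠ b → h z = ⊤))
    (Y : Matrix (Fin M) (Fin N) ℝ)
    (hY : Y = A * Matrix.diagonal fun i => (Real.sqrt (d i))⁻¹)
    (Pr : Matrix (Fin N) (Fin N) ℝ)
    (hPr₁ : Prᵀ = Pr) (hPr₂ : Pr * Pr = Pr)
    (hPr₃ : ∀ v : Fin N → ℝ, Y *ᵥ (Pr *ᵥ v) = 0)
    (hPr₄ : ∀ v : Fin N → ℝ, Y *ᵥ v = 0 → Pr *ᵥ v = v)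
    (Yp : Matrix (Fin N) (Fin M) ℝ) (hYp : IsMoorePenrose Y Yp)
    (c : Fin N → ℝ) (hc : c = Yp *ᵥ b)
    (proxg : (Fin N → ℝ) → (Fin N → ℝ))
    (hproxg : ∀ w : Fin N → ℝ,
      IsProxPt 1 (fun z => h ((Matrix.diagonal fun i => (Real.sqrt (d i))⁻¹) *ᵥ z))
        w (proxg w))
    (x : Fin N → ℝ)
    (L : ℝ → ℝ)
    (hL : ∀ α : ℝ, L α =
      u ⬝ᵥ (x - (Matrix.diagonal fun i => (Real.sqrt (d i))⁻¹) *ᵥ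
        proxg ((Matrix.diagonal fun i => Real.sqrt (d i)) *ᵥ
          (x - (ε * α) • ((Matrix.diagonal fun i => (d i)⁻¹) *ᵥ u)))) + α)
    (αs : ℝ)
    (hαs : αs = (u ⬝ᵥ ((Matrix.diagonal fun i => (Real.sqrt (d i))⁻¹) *ᵥ
        (c - ((1 : Matrix (Fin N) (Fin N) ℝ) - Pr) *ᵥ
          ((Matrix.diagonal fun i => Real.sqrt (d i)) *ᵥ x)))) /
      (1 + ε * (u ⬝ᵥ ((Matrix.diagonal fun i => (Real.sqrt (d i))⁻¹) *ᵥ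
        (Pr *ᵥ ((Matrix.diagonal fun i => (Real.sqrt (d i))⁻¹) *ᵥ u)))))) :
    (∀ z : Fin N → ℝ, proxg z = Pr *ᵥ z + c) ∧
    L αs = 0 ∧ (∀ α : ℝ, L α = 0 → α = αs) := by
  have hAY : ∀ w, A *ᵥ ((diagonal fun i => (√(d i))⁻¹) *ᵥ w) = Y *ᵥ w := fun w => by
    rw [mulVec_mulVec, hY]
  have hfeasY : ∃ v, Y *ᵥ v = b := by
    obtain ⟨z₀, hz₀⟩ := hfeas
    refine ⟨(diagonal fun i => √(d i)) *ᵥ z₀, ?_⟩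
    rw [← hAY, diagonal_inv_sqrt_mulVec_diagonal_sqrt_mulVec hd, hz₀]
  have hprox : ∀ z, proxg z = Pr *ᵥ z + c := fun z => hc ▸
    (hproxg z).eq_mulVec_add_mulVec_of_isMoorePenrose (fun w hw => (hind _).1 (by rwa [hAY]))
      (fun w hw => (hind _).2 (by rwa [hAY])) hfeasY hPr₁ hPr₃ hPr₄ hYp
  have hslope := one_add_mul_dotProduct_pos_of_posDef hd (hV ▸ hVpd) hPr₁ hPr₂
  set q := u ⬝ᵥ ((diagonal fun i => (√(d i))⁻¹) *ᵥ
    (Pr *ᵥ ((diagonal fun i => (√(d i))⁻¹) *ᵥ u)))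
  set r := u ⬝ᵥ ((diagonal fun i => (√(d i))⁻¹) *ᵥ
        (c - ((1 : Matrix (Fin N) (Fin N) ℝ) - Pr) *ᵥ ((diagonal fun i => √(d i)) *ᵥ x)))
  have hL_affine : ∀ α, L α = α * (1 + ε * q) - r := by
    intro α
    rw [hL α, hprox, mulVec_sub, mulVec_smul, mulVec_mulVec (N := diagonal fun i => (d i)⁻¹),
      diagonal_sqrt_mul_diagonal_inv hd]
    simp only [q, r, mulVec_add, mulVec_sub, mulVec_smul, sub_mulVec, one_mulVec,
      diagonal_inv_sqrt_mulVec_diagonal_sqrt_mulVec hd, dotProduct_sub, dotProduct_add,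
      dotProduct_smul, smul_eq_mul]
    ring
  refine ⟨hprox, ?_, fun α hα => ?_⟩
  · rw [hL_affine, hαs, div_mul_cancel₀ _ hslope.ne', sub_self]
  · rw [hL_affine] at hα
    rw [hαs, eq_div_iff hslope.ne']
    linarith

/-- Affine-constraint example: for `V = D ± u uᵀ` SPD (`ε = 1` for `+`,
`ε = -1` for `-`), `h` the indicator of `{x : A x = b}` (nonempty), `Y = A D^{-1/2}`,
`Pr` the orthogonal projector onto `Ker Y`, `c = Y⁺ b`:
(i) `prox_{h∘D^{-1/2}}(z) = Pr z + c` for every `z`; and (ii) the unique root of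
`L(α) = ⟨u, x - D^{-1/2}(prox_{h∘D^{-1/2}}(D^{1/2}(x ∓ α D⁻¹ u)))⟩ + α` is
`α* = ⟨u, D^{-1/2}(c - (Id - Pr) D^{1/2} x)⟩ / (1 ± ⟨u, D^{-1/2} Pr D^{-1/2} u⟩)`. -/
theorem stmt_18 {N M : ℕ}
    (d : Fin N → ℝ) (hd : ∀ i, 0 < d i)
    (u : Fin N → ℝ)
    (ε : ℝ) (hε : ε = 1 ∨ ε = -1)
    (V : Matrix (Fin N) (Fin N) ℝ)
    (hV : V = Matrix.diagonal d + ε • vecMulVec u u) (hVpd : V.PosDef)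
    (A : Matrix (Fin M) (Fin N) ℝ) (b : Fin M → ℝ) (hfeas : ∃ z, A *ᵥ z = b)
    (h : (Fin N → ℝ) → EReal)
    (hind : ∀ z : Fin N → ℝ, (A *ᵥ z = b → h z = 0) ∧ (A *ᵥ z ≠ b → h z = ⊤))
    (Y : Matrix (Fin M) (Fin N) ℝ)
    (hY : Y = A * Matrix.diagonal fun i => (Real.sqrt (d i))⁻¹)
    (Pr : Matrix (Fin N) (Fin N) ℝ)
    (hPr₁ : Prᵀ = Pr) (hPr₂ : Pr * Pr = Pr)
    (hPr₃ : ∀ v : Fin N → ℝ, Y *ᵥ (Pr *ᵥ v) = 0)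
    (hPr₄ : ∀ v : Fin N → ℝ, Y *ᵥ v = 0 → Pr *ᵥ v = v)
    (Yp : Matrix (Fin N) (Fin M) ℝ) (hYp : IsMoorePenrose Y Yp)
    (c : Fin N → ℝ) (hc : c = Yp *ᵥ b)
    (proxg : (Fin N → ℝ) → (Fin N → ℝ))
    (hproxg : ∀ w : Fin N → ℝ,
      IsProxPt 1 (fun z => h ((Matrix.diagonal fun i => (Real.sqrt (d i))⁻¹) *ᵥ z))
        w (proxg w))
    (x : Fin N → ℝ)
    (L : ℝ → ℝ)
    (hL : ∀ α : ℝ, L α =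
      u ⬝ᵥ (x - (Matrix.diagonal fun i => (Real.sqrt (d i))⁻¹) *ᵥ
        proxg ((Matrix.diagonal fun i => Real.sqrt (d i)) *ᵥ
          (x - (ε * α) • ((Matrix.diagonal fun i => (d i)⁻¹) *ᵥ u)))) + α)
    (αs : ℝ)
    (hαs : αs = (u ⬝ᵥ ((Matrix.diagonal fun i => (Real.sqrt (d i))⁻¹) *ᵥ
        (c - ((1 : Matrix (Fin N) (Fin N) ℝ) - Pr) *ᵥ
          ((Matrix.diagonal fun i => Real.sqrt (d i)) *ᵥ x)))) /
      (1 + ε * (u ⬝ᵥ ((Matrix.diagonal fun i => (Real.sqrt (d i))⁻¹) *ᵥ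
        (Pr *ᵥ ((Matrix.diagonal fun i => (Real.sqrt (d i))⁻¹) *ᵥ u)))))) :
    (∀ z : Fin N → ℝ, proxg z = Pr *ᵥ z + c) ∧
    L αs = 0 ∧ (∀ α : ℝ, L α = 0 → α = αs) :=
  stmt_18_general d hd u ε V hV hVpd A b hfeas h hind Y hY Pr hPr₁ hPr₂ hPr₃ hPr₄ Yp hYp c hc proxg
    hproxg x L hL αs hαs
end
end

section
/- Let s, y ∈ ℝ^N with y ≠ 0 and ⟨s, y⟩ ≠ 0. Set ρ = 1/⟨s, y⟩, τ = ⟨s, y⟩/‖y‖² (so that ρ τ ‖y‖² = 1), and let γ > 0. Then the following matrix identity holds: (Id − ρ s y^T)(γτ·Id)(Id − ρ y s^T) + ρ s s^T = γτ·Id + ρ(1+γ) u_γ u_γ^T − ρ γ²τ²/(1+γ) · y y^T, where u_γ = s − (γτ/(1+γ)) y. In particular, the zero-memory BFGS inverse-Hessian approximation V^T H₀ V + ρ s s^T with V = Id − ρ y s^T and H₀ = γτ·Id has the structure 'diagonal + rank-1 − rank-1' with positive semidefinite rank-1 terms. -/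
/-!
Expanding the left side with `(a bᵀ)(c dᵀ) = ⟨b, c⟩ a dᵀ` leaves a combination of `Id`,
`s sᵀ`, `s yᵀ + y sᵀ` and `y yᵀ`. The choice `ρ τ ‖y‖² = 1` collapses the `s sᵀ` coefficient
`γ τ ρ² ‖y‖² + ρ` to `ρ (1 + γ)`, and completing the square in `s` with the shift
`γ τ / (1 + γ)` produces the cross terms `- γ τ ρ (s yᵀ + y sᵀ)` exactly, at the price of the
correction `- ρ γ² τ² / (1 + γ) · y yᵀ`.
-/

open Matrix

namespace Matrix

variable {n R : Type*}

theorem vecMulVec_sub_smul_self [CommRing R] (a b : n → R) (t : R) :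
    vecMulVec (a - t • b) (a - t • b)
      = vecMulVec a a - t • (vecMulVec a b + vecMulVec b a) + t ^ 2 • vecMulVec b b := by
  simp only [sub_vecMulVec, vecMulVec_sub, smul_vecMulVec, vecMulVec_smul, smul_add]
  module

variable [Fintype n] [DecidableEq n]

theorem one_sub_smul_vecMulVec_mul_smul_one_mul [CommRing R] (s y : n → R) (ρ c : R) :
    (1 - ρ • vecMulVec s y) * (c • 1) * (1 - ρ • vecMulVec y s)
      = c • 1 - (c * ρ) • (vecMulVec s y + vecMulVec y s)
        + (c * ρ ^ 2 * (y ⬝ᵥ y)) • vecMulVec s s := by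
  simp only [smul_sub, sub_mul, mul_sub, one_mul, mul_one, smul_mul_assoc, mul_smul_comm,
    vecMulVec_mul_vecMulVec, vecMulVec_smul, smul_add]
  module

theorem bfgs_update_smul_one_eq [Field R] (s y : n → R) {ρ τ γ : R}
    (hρτ : ρ * τ * (y ⬝ᵥ y) = 1) (hγ : 1 + γ ≠ 0) :
    (1 - ρ • vecMulVec s y) * ((γ * τ) • 1) * (1 - ρ • vecMulVec y s) + ρ • vecMulVec s s
      = (γ * τ) • 1
        + (ρ * (1 + γ)) • vecMulVec (s - (γ * τ / (1 + γ)) • y) (s - (γ * τ / (1 + γ)) • y)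
        - (ρ * γ ^ 2 * τ ^ 2 / (1 + γ)) • vecMulVec y y := by
  rw [one_sub_smul_vecMulVec_mul_smul_one_mul, vecMulVec_sub_smul_self,
    show γ * τ * ρ ^ 2 * (y ⬝ᵥ y) = γ * ρ by linear_combination (γ * ρ) * hρτ]
  match_scalars <;> field_simp <;> ring

end Matrix

theorem stmt_19_general {N : ℕ} (s y : Fin N → ℝ) (hsy : s ⬝ᵥ y ≠ 0)
    (ρ τ γ : ℝ) (hρ : ρ = (s ⬝ᵥ y)⁻¹) (hτ : τ = (s ⬝ᵥ y) / (y ⬝ᵥ y)) (hγ : 0 < γ) :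
    ((1 : Matrix (Fin N) (Fin N) ℝ) - ρ • vecMulVec s y)
        * ((γ * τ) • (1 : Matrix (Fin N) (Fin N) ℝ))
        * ((1 : Matrix (Fin N) (Fin N) ℝ) - ρ • vecMulVec y s)
      + ρ • vecMulVec s s
    = (γ * τ) • (1 : Matrix (Fin N) (Fin N) ℝ)
      + (ρ * (1 + γ)) • vecMulVec (s - (γ * τ / (1 + γ)) • y) (s - (γ * τ / (1 + γ)) • y)
      - (ρ * γ ^ 2 * τ ^ 2 / (1 + γ)) • vecMulVec y y := by
  have hy : y ≠ 0 := by
    rintro rfl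
    exact hsy (dotProduct_zero s)
  have hyy : y ⬝ᵥ y ≠ 0 := fun h => hy (dotProduct_self_eq_zero.mp h)
  have hρτ : ρ * τ * (y ⬝ᵥ y) = 1 := by
    rw [hρ, hτ]
    field_simp
  exact bfgs_update_smul_one_eq s y hρτ (by positivity)

/-- The zero-memory BFGS algebraic identity: for `s, y ∈ ℝ^N` with
`y ≠ 0`, `⟨s,y⟩ ≠ 0`, `ρ = 1/⟨s,y⟩`, `τ = ⟨s,y⟩/‖y‖²` and `γ > 0`:
`(Id - ρ s yᵀ)(γτ·Id)(Id - ρ y sᵀ) + ρ s sᵀ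
  = γτ·Id + ρ(1+γ) u_γ u_γᵀ - ργ²τ²/(1+γ) y yᵀ`, with `u_γ = s - (γτ/(1+γ)) y`;
in particular the zero-memory BFGS inverse-Hessian approximation has the structure
"diagonal + rank-1 − rank-1" with positive semidefinite rank-1 terms. -/
theorem stmt_19 {N : ℕ} (s y : Fin N → ℝ) (hy : y ≠ 0) (hsy : s ⬝ᵥ y ≠ 0)
    (ρ τ γ : ℝ) (hρ : ρ = (s ⬝ᵥ y)⁻¹) (hτ : τ = (s ⬝ᵥ y) / (y ⬝ᵥ y)) (hγ : 0 < γ) :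
    ((1 : Matrix (Fin N) (Fin N) ℝ) - ρ • vecMulVec s y)
        * ((γ * τ) • (1 : Matrix (Fin N) (Fin N) ℝ))
        * ((1 : Matrix (Fin N) (Fin N) ℝ) - ρ • vecMulVec y s)
      + ρ • vecMulVec s s
    = (γ * τ) • (1 : Matrix (Fin N) (Fin N) ℝ)
      + (ρ * (1 + γ)) • vecMulVec (s - (γ * τ / (1 + γ)) • y) (s - (γ * τ / (1 + γ)) • y)
      - (ρ * γ ^ 2 * τ ^ 2 / (1 + γ)) • vecMulVec y y :=
  stmt_19_general s y hsy ρ τ γ hρ hτ hγ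
end
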